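/- Let R₁, R_z > 0 and p ∈ [1, ∞). Let μ₁, μ₂ be Borel probability measures on ℝ^d supported in the closed ball B̄(R₁), and let z ∈ ℝ^d with ‖z‖ ≤ R_z. Then for every coupling π of μ₁ and μ₂ one has |1/γ₂(z, μ₁) − 1/γ₂(z, μ₂)| ≤ R_z · exp((3 + 2/p) R_z R₁) · (∫ ‖x − y‖^p dπ(x, y))^{1/p}. -/

import Mathlib

open MeasureTheory
open scoped RealInnerProductSpace

/-- The normalisation constant `γ₂(z, μ) = ∫ exp⟨z,y⟩ dμ(y)`. -/
noncomputable def gamma2 {d : ℕ} (z : EuclideanSpace ℝ (Fin d))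
    (μ : Measure (EuclideanSpace ℝ (Fin d))) : ℝ :=
  ∫ y, Real.exp ⟪z, y⟫ ∂μ

/-- The attention map `γ(z, μ) = (∫ exp⟨z,y⟩ • y dμ(y)) / γ₂(z, μ)`. -/
noncomputable def gammaAttn {d : ℕ} (z : EuclideanSpace ℝ (Fin d))
    (μ : Measure (EuclideanSpace ℝ (Fin d))) : EuclideanSpace ℝ (Fin d) :=
  (gamma2 z μ)⁻¹ • ∫ y, Real.exp ⟪z, y⟫ • y ∂μ

/-!
On `B̄(R₁)` the exponent `⟪z, y⟫` lies in `[-Rz R₁, Rz R₁]`, so `γ₂(z, μ) ≥ exp (-Rz R₁)` and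
`y ↦ exp ⟪z, y⟫` is `Rz exp (Rz R₁)`-Lipschitz there. Writing both `γ₂(z, μᵢ)` as integrals against
the coupling `π` gives `|γ₂(z, μ₁) - γ₂(z, μ₂)| ≤ Rz exp (Rz R₁) ∫ ‖x - y‖ dπ`, and the `L¹` norm is
at most the `Lᵖ` norm by Hölder. Inverting costs the factor `exp (2 Rz R₁)` from the lower bound,
and `exp (3 Rz R₁) ≤ exp ((3 + 2/p) Rz R₁)`.
-/

open Metric

lemma Real.abs_exp_sub_exp_le_exp_mul {a b c : ℝ} (ha : a ≤ c) (hb : b ≤ c) :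
    |Real.exp a - Real.exp b| ≤ Real.exp c * |a - b| := by
  wlog hba : b ≤ a generalizing a b
  · rw [abs_sub_comm, abs_sub_comm a b]
    exact this hb ha (le_of_not_ge hba)
  rw [abs_of_nonneg (sub_nonneg.2 (Real.exp_le_exp.2 hba)), abs_of_nonneg (sub_nonneg.2 hba)]
  have h_tangent : Real.exp a * (b - a + 1) ≤ Real.exp b := by
    rw [show b = a + (b - a) by ring, Real.exp_add]
    simpa using mul_le_mul_of_nonneg_left (Real.add_one_le_exp (b - a)) (Real.exp_pos a).le
  nlinarith [Real.exp_le_exp.2 ha]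

lemma abs_inv_sub_inv_le_of_le {a b m : ℝ} (hm : 0 < m) (ha : m ≤ a) (hb : m ≤ b) :
    |a⁻¹ - b⁻¹| ≤ m⁻¹ ^ 2 * |a - b| := by
  have ha₀ : 0 < a := hm.trans_le ha
  have hb₀ : 0 < b := hm.trans_le hb
  rw [inv_sub_inv ha₀.ne' hb₀.ne', abs_div, abs_sub_comm, abs_of_pos (mul_pos ha₀ hb₀),
    div_eq_inv_mul, mul_inv, sq]
  gcongr

lemma integral_le_integral_rpow_one_div {α : Type*} [MeasurableSpace α] {μ : Measure α}
    [IsProbabilityMeasure μ] {f : α → ℝ} {p : ℝ} (hp : 1 ≤ p) (hf₀ : 0 ≤ᵐ[μ] f)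
    (hf : MemLp f (ENNReal.ofReal p) μ) :
    ∫ a, f a ∂μ ≤ (∫ a, f a ^ p ∂μ) ^ (1 / p) := by
  rcases hp.eq_or_lt with rfl | hp
  · simp
  simpa using integral_mul_le_Lp_mul_Lq_of_nonneg (Real.HolderConjugate.conjExponent hp) hf₀
    (Filter.Eventually.of_forall fun _ ↦ zero_le_one) hf (memLp_const 1)

section InnerProductSpace

variable {E : Type*} [NormedAddCommGroup E] [InnerProductSpace ℝ E] {z x y : E} {r R : ℝ}

lemma abs_inner_le_of_mem_closedBall (hz : ‖z‖ ≤ r) (hy : y ∈ closedBall 0 R) :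
    |⟪z, y⟫| ≤ r * R := by
  rw [mem_closedBall_zero_iff] at hy
  exact (abs_real_inner_le_norm z y).trans
    (mul_le_mul hz hy (norm_nonneg y) ((norm_nonneg z).trans hz))

lemma abs_exp_inner_sub_exp_inner_le (hz : ‖z‖ ≤ r) (hx : x ∈ closedBall 0 R)
    (hy : y ∈ closedBall 0 R) :
    |Real.exp ⟪z, x⟫ - Real.exp ⟪z, y⟫| ≤ r * Real.exp (r * R) * ‖x - y‖ :=
  calc |Real.exp ⟪z, x⟫ - Real.exp ⟪z, y⟫|
      ≤ Real.exp (r * R) * |⟪z, x⟫ - ⟪z, y⟫| :=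
        Real.abs_exp_sub_exp_le_exp_mul (le_of_abs_le (abs_inner_le_of_mem_closedBall hz hx))
          (le_of_abs_le (abs_inner_le_of_mem_closedBall hz hy))
    _ ≤ Real.exp (r * R) * (r * ‖x - y‖) := by
        rw [← inner_sub_right]
        gcongr
        exact (abs_real_inner_le_norm z _).trans (by gcongr)
    _ = r * Real.exp (r * R) * ‖x - y‖ := by ring

end InnerProductSpace

section Gamma2

variable {d : ℕ} {z : EuclideanSpace ℝ (Fin d)} {r R : ℝ}

lemma integrable_exp_inner_of_ae_mem_closedBall {μ : Measure (EuclideanSpace ℝ (Fin d))}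
    [IsFiniteMeasure μ] (hμ : ∀ᵐ y ∂μ, y ∈ closedBall 0 R) :
    Integrable (fun y ↦ Real.exp ⟪z, y⟫) μ := by
  refine .of_bound (by fun_prop) (Real.exp (‖z‖ * R)) ?_
  filter_upwards [hμ] with y hy
  rw [Real.norm_of_nonneg (Real.exp_pos _).le, Real.exp_le_exp]
  exact le_of_abs_le (abs_inner_le_of_mem_closedBall le_rfl hy)

lemma exp_neg_mul_le_gamma2 {μ : Measure (EuclideanSpace ℝ (Fin d))} [IsProbabilityMeasure μ]
    (hz : ‖z‖ ≤ r) (hμ : ∀ᵐ y ∂μ, y ∈ closedBall 0 R) :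
    Real.exp (-(r * R)) ≤ gamma2 z μ := by
  have := integral_mono_ae (integrable_const (Real.exp (-(r * R))))
    (integrable_exp_inner_of_ae_mem_closedBall hμ) (by
      filter_upwards [hμ] with y hy
      exact Real.exp_le_exp.2 (neg_le_of_abs_le (abs_inner_le_of_mem_closedBall hz hy)))
  simpa [gamma2] using this

variable {π : Measure (EuclideanSpace ℝ (Fin d) × EuclideanSpace ℝ (Fin d))}

lemma ae_norm_sub_le_of_ae_mem_closedBall (h₁ : ∀ᵐ q ∂π, q.1 ∈ closedBall 0 R)
    (h₂ : ∀ᵐ q ∂π, q.2 ∈ closedBall 0 R) : ∀ᵐ q ∂π, ‖‖q.1 - q.2‖‖ ≤ R + R := by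
  filter_upwards [h₁, h₂] with q hq₁ hq₂
  rw [norm_norm]
  exact (norm_sub_le _ _).trans
    (add_le_add (mem_closedBall_zero_iff.1 hq₁) (mem_closedBall_zero_iff.1 hq₂))

lemma abs_gamma2_fst_sub_gamma2_snd_le [IsFiniteMeasure π] (hz : ‖z‖ ≤ r)
    (h₁ : ∀ᵐ q ∂π, q.1 ∈ closedBall 0 R) (h₂ : ∀ᵐ q ∂π, q.2 ∈ closedBall 0 R) :
    |gamma2 z π.fst - gamma2 z π.snd| ≤ r * Real.exp (r * R) * ∫ q, ‖q.1 - q.2‖ ∂π := by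
  have hint : ∀ {f : EuclideanSpace ℝ (Fin d) × EuclideanSpace ℝ (Fin d) →
      EuclideanSpace ℝ (Fin d)}, Measurable f → (∀ᵐ q ∂π, f q ∈ closedBall 0 R) →
      Integrable (fun q ↦ Real.exp ⟪z, f q⟫) π := fun hf hfR ↦
    (integrable_exp_inner_of_ae_mem_closedBall (ae_map_iff hf.aemeasurable
      measurableSet_closedBall |>.2 hfR)).comp_measurable hf
  have hnorm : Integrable (fun q ↦ ‖q.1 - q.2‖) π :=
    .of_bound (by fun_prop) (R + R) (ae_norm_sub_le_of_ae_mem_closedBall h₁ h₂)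
  rw [gamma2, gamma2, Measure.fst, Measure.snd, integral_map (by fun_prop) (by fun_prop),
    integral_map (by fun_prop) (by fun_prop), ← integral_sub (hint measurable_fst h₁)
    (hint measurable_snd h₂), ← integral_const_mul, ← Real.norm_eq_abs]
  refine (norm_integral_le_integral_norm _).trans (integral_mono_ae ?_ (hnorm.const_mul _) ?_)
  · exact ((hint measurable_fst h₁).sub (hint measurable_snd h₂)).norm
  · filter_upwards [h₁, h₂] with q hq₁ hq₂
    exact abs_exp_inner_sub_exp_inner_le hz hq₁ hq₂

end Gamma2

theorem stmt_8 {d : ℕ} (R₁ Rz p : ℝ) (hR₁ : 0 < R₁) (hRz : 0 < Rz) (hp : 1 ≤ p)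
    (μ₁ μ₂ : Measure (EuclideanSpace ℝ (Fin d)))
    (hμ₁ : μ₁ (Metric.closedBall 0 R₁) = 1) (hμ₂ : μ₂ (Metric.closedBall 0 R₁) = 1)
    (z : EuclideanSpace ℝ (Fin d)) (hz : ‖z‖ ≤ Rz)
    (π : Measure (EuclideanSpace ℝ (Fin d) × EuclideanSpace ℝ (Fin d)))
    [IsProbabilityMeasure π] (hfst : π.fst = μ₁) (hsnd : π.snd = μ₂) :
    |(gamma2 z μ₁)⁻¹ - (gamma2 z μ₂)⁻¹| ≤
      Rz * Real.exp ((3 + 2 / p) * Rz * R₁) * (∫ q, ‖q.1 - q.2‖ ^ p ∂π) ^ (1 / p) := by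
  subst hfst hsnd
  have hball₁ : ∀ᵐ y ∂π.fst, y ∈ closedBall 0 R₁ :=
    (mem_ae_iff_prob_eq_one measurableSet_closedBall).2 hμ₁
  have hball₂ : ∀ᵐ y ∂π.snd, y ∈ closedBall 0 R₁ :=
    (mem_ae_iff_prob_eq_one measurableSet_closedBall).2 hμ₂
  have h₁ : ∀ᵐ q ∂π, q.1 ∈ closedBall 0 R₁ := ae_of_ae_map (by fun_prop) hball₁
  have h₂ : ∀ᵐ q ∂π, q.2 ∈ closedBall 0 R₁ := ae_of_ae_map (by fun_prop) hball₂
  have hL1_Lp : ∫ q, ‖q.1 - q.2‖ ∂π ≤ (∫ q, ‖q.1 - q.2‖ ^ p ∂π) ^ (1 / p) :=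
    integral_le_integral_rpow_one_div hp (.of_forall fun _ ↦ norm_nonneg _)
      (.of_bound (by fun_prop) (R₁ + R₁) (ae_norm_sub_le_of_ae_mem_closedBall h₁ h₂))
  calc |(gamma2 z π.fst)⁻¹ - (gamma2 z π.snd)⁻¹|
      ≤ (Real.exp (-(Rz * R₁)))⁻¹ ^ 2 * |gamma2 z π.fst - gamma2 z π.snd| :=
        abs_inv_sub_inv_le_of_le (Real.exp_pos _) (exp_neg_mul_le_gamma2 hz hball₁)
          (exp_neg_mul_le_gamma2 hz hball₂)
    _ ≤ Real.exp (Rz * R₁) ^ 2 * (Rz * Real.exp (Rz * R₁) *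
          (∫ q, ‖q.1 - q.2‖ ^ p ∂π) ^ (1 / p)) := by
        rw [Real.exp_neg, inv_inv]
        gcongr
        exact (abs_gamma2_fst_sub_gamma2_snd_le hz h₁ h₂).trans (by gcongr)
    _ = Rz * Real.exp (3 * Rz * R₁) * (∫ q, ‖q.1 - q.2‖ ^ p ∂π) ^ (1 / p) := by
        rw [show 3 * Rz * R₁ = Rz * R₁ + Rz * R₁ + Rz * R₁ by ring, Real.exp_add, Real.exp_add]
        ring
    _ ≤ Rz * Real.exp ((3 + 2 / p) * Rz * R₁) * (∫ q, ‖q.1 - q.2‖ ^ p ∂π) ^ (1 / p) := by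
        gcongr
        exact le_add_of_nonneg_right (by positivity)
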